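/- Let (Ω, 𝔽, ℙ) be a probability space and X : Ω → {Hermitian d × d complex matrices} a Bochner-integrable random matrix such that X ⊗ X is also Bochner-integrable, with mean μ = 𝔼[X]. Then 𝔼[ ‖X − μ‖∞² ] ≤ d² · ‖𝔼[X ⊗ X] − μ ⊗ μ‖∞. -/

import Mathlib

open MeasureTheory
open scoped ComplexOrder

/-- Operator norm (largest singular value) of a complex matrix. -/
noncomputable def opNorm {m n : Type*} [Fintype m] [Fintype n] [DecidableEq n]
    (M : Matrix m n ℂ) : ℝ :=
  ‖LinearMap.toContinuousLinearMap (Matrix.toEuclideanLin M)‖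

/-! The operator norm is dominated by the Frobenius norm, so `𝔼‖X − μ‖∞² ≤ ∑ᵢⱼ 𝔼|Xᵢⱼ − μᵢⱼ|²`.
Since `X` is Hermitian, `Xⱼᵢ = conj Xᵢⱼ`, so each variance `𝔼|Xᵢⱼ − μᵢⱼ|²` is the real part of the
covariance entry `(𝔼[X ⊗ X] − μ ⊗ μ)₍ᵢⱼ₎₍ⱼᵢ₎`; and an entry of a matrix is bounded by its operator
norm. -/

section OpNorm
variable {m n : Type*} [Fintype m] [Fintype n] [DecidableEq n]

theorem norm_apply_le_opNorm (M : Matrix m n ℂ) (i : m) (j : n) : ‖M i j‖ ≤ opNorm M := by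
  have h := (LinearMap.toContinuousLinearMap (Matrix.toEuclideanLin M)).le_opNorm
    (EuclideanSpace.single j 1)
  rw [PiLp.norm_single, norm_one, mul_one] at h
  refine le_trans ?_ ((PiLp.norm_apply_le _ i).trans h)
  simp [Matrix.mulVec_single]

theorem opNorm_sq_le_sum_norm_sq (M : Matrix m n ℂ) : opNorm M ^ 2 ≤ ∑ i, ∑ j, ‖M i j‖ ^ 2 := by
  have hrow : ∀ i, ∑ j, ‖M i j‖ ^ 2 = ‖WithLp.toLp 2 (star (M i))‖ ^ 2 := by
    intro i; simp [EuclideanSpace.norm_sq_eq]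
  have hbound : opNorm M ≤ √(∑ i, ∑ j, ‖M i j‖ ^ 2) := by
    refine ContinuousLinearMap.opNorm_le_bound _ (Real.sqrt_nonneg _) fun x => ?_
    rw [← Real.sqrt_sq (norm_nonneg x), ← Real.sqrt_mul (by positivity),
      ← Real.sqrt_sq (norm_nonneg _)]
    refine Real.sqrt_le_sqrt ?_
    rw [EuclideanSpace.norm_sq_eq, Finset.sum_mul]
    refine Finset.sum_le_sum fun i _ => ?_
    have hcoord : (LinearMap.toContinuousLinearMap (Matrix.toEuclideanLin M) x) i
        = inner ℂ (WithLp.toLp 2 (star (M i))) x := by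
      simp [EuclideanSpace.inner_eq_star_dotProduct, Matrix.mulVec, dotProduct, mul_comm]
    rw [hcoord, hrow, ← mul_pow]
    exact pow_le_pow_left₀ (norm_nonneg _) (norm_inner_le_norm _ _) 2
  calc opNorm M ^ 2 ≤ √(∑ i, ∑ j, ‖M i j‖ ^ 2) ^ 2 := pow_le_pow_left₀ (norm_nonneg _) hbound 2
    _ = _ := Real.sq_sqrt (by positivity)
end OpNorm

theorem integral_opNorm_sq_le_sum_integral_norm_sq {Ω m n : Type*} [MeasurableSpace Ω]
    {P : Measure Ω} [Fintype m] [Fintype n] [DecidableEq n] (Y : Ω → Matrix m n ℂ)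
    (hY : ∀ i j, Integrable (fun ω => ‖Y ω i j‖ ^ 2) P) :
    ∫ ω, opNorm (Y ω) ^ 2 ∂P ≤ ∑ i, ∑ j, ∫ ω, ‖Y ω i j‖ ^ 2 ∂P := by
  have hsum : Integrable (fun ω => ∑ i, ∑ j, ‖Y ω i j‖ ^ 2) P :=
    integrable_finsetSum _ fun i _ => integrable_finsetSum _ fun j _ => hY i j
  calc ∫ ω, opNorm (Y ω) ^ 2 ∂P ≤ ∫ ω, ∑ i, ∑ j, ‖Y ω i j‖ ^ 2 ∂P :=
        integral_mono_of_nonneg (.of_forall fun ω => sq_nonneg _) hsum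
          (.of_forall fun ω => opNorm_sq_le_sum_norm_sq (Y ω))
    _ = ∑ i, ∑ j, ∫ ω, ‖Y ω i j‖ ^ 2 ∂P := by
        rw [integral_finsetSum _ fun i _ => integrable_finsetSum _ fun j _ => hY i j]
        exact Finset.sum_congr rfl fun i _ => integral_finsetSum _ fun j _ => hY i j

section Covariance
variable {Ω 𝕜 : Type*} [MeasurableSpace Ω] {P : Measure Ω} [RCLike 𝕜] {f g : Ω → 𝕜}

theorem MeasureTheory.Integrable.conj (hf : Integrable f P) :
    Integrable (fun ω => starRingEnd 𝕜 (f ω)) P :=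
  RCLike.conjCLE.toContinuousLinearMap.integrable_comp hf

theorem norm_sub_sq_eq_re_mul_conj_sub (z a : 𝕜) :
    ‖z - a‖ ^ 2 = RCLike.re ((z - a) * (starRingEnd 𝕜 z - starRingEnd 𝕜 a)) := by
  rw [← map_sub, RCLike.mul_conj, ← RCLike.ofReal_pow, RCLike.ofReal_re]

theorem integrable_sub_const_mul_sub_const [IsFiniteMeasure P] (hf : Integrable f P)
    (hg : Integrable g P) (hfg : Integrable (fun ω => f ω * g ω) P) (a b : 𝕜) :
    Integrable (fun ω => (f ω - a) * (g ω - b)) P := by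
  have hexp : (fun ω => (f ω - a) * (g ω - b))
      = fun ω => f ω * g ω - b * f ω - a * g ω + a * b := by
    funext ω; ring
  rw [hexp]
  exact ((hfg.sub (hf.const_mul b)).sub (hg.const_mul a)).add (integrable_const _)

variable [IsProbabilityMeasure P]

theorem integral_sub_integral_mul_sub_integral (hf : Integrable f P)
    (hg : Integrable g P) (hfg : Integrable (fun ω => f ω * g ω) P) :
    ∫ ω, (f ω - ∫ ω', f ω' ∂P) * (g ω - ∫ ω', g ω' ∂P) ∂P
      = ∫ ω, f ω * g ω ∂P - (∫ ω, f ω ∂P) * ∫ ω, g ω ∂P := by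
  set a := ∫ ω, f ω ∂P
  set b := ∫ ω, g ω ∂P
  have hexp : (fun ω => (f ω - a) * (g ω - b))
      = fun ω => f ω * g ω - b * f ω - a * g ω + a * b := by
    funext ω; ring
  rw [hexp, integral_add, integral_sub, integral_sub, integral_const_mul, integral_const_mul,
    integral_const, probReal_univ, one_smul]
  · ring
  all_goals fun_prop

theorem integrable_norm_sub_sq (hf : Integrable f P)
    (hff : Integrable (fun ω => f ω * g ω) P) (hgf : ∀ ω, g ω = starRingEnd 𝕜 (f ω)) (a : 𝕜) :
    Integrable (fun ω => ‖f ω - a‖ ^ 2) P := by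
  have hg : Integrable g P := funext hgf ▸ hf.conj
  simp_rw [norm_sub_sq_eq_re_mul_conj_sub, ← hgf]
  exact (integrable_sub_const_mul_sub_const hf hg hff a _).re

theorem integral_norm_sub_integral_sq (hf : Integrable f P)
    (hff : Integrable (fun ω => f ω * g ω) P) (hgf : ∀ ω, g ω = starRingEnd 𝕜 (f ω)) :
    ∫ ω, ‖f ω - ∫ ω', f ω' ∂P‖ ^ 2 ∂P
      = RCLike.re (∫ ω, f ω * g ω ∂P - (∫ ω, f ω ∂P) * ∫ ω, g ω ∂P) := by
  have hg : Integrable g P := funext hgf ▸ hf.conj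
  have hmean : starRingEnd 𝕜 (∫ ω, f ω ∂P) = ∫ ω, g ω ∂P := by
    rw [← integral_conj, funext hgf]
  simp_rw [norm_sub_sq_eq_re_mul_conj_sub, ← hgf, hmean]
  rw [integral_re (integrable_sub_const_mul_sub_const hf hg hff _ _),
    integral_sub_integral_mul_sub_integral hf hg hff]
end Covariance

theorem operator_second_moment_bound_general
    {Ω : Type*} [MeasurableSpace Ω] (P : Measure Ω) [IsProbabilityMeasure P]
    (d : ℕ)
    (X : Ω → Matrix (Fin d) (Fin d) ℂ)
    (hherm : ∀ ω, (X ω).IsHermitian)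
    (hint : ∀ i j, Integrable (fun ω => X ω i j) P)
    (hint2 : ∀ i j k l, Integrable (fun ω => X ω i j * X ω k l) P) :
    (∫ ω, (opNorm (X ω - Matrix.of fun i j => ∫ ω', X ω' i j ∂P)) ^ 2 ∂P)
      ≤ (d : ℝ) ^ 2 *
          opNorm
            ((Matrix.of fun (p q : Fin d × Fin d) => ∫ ω', X ω' p.1 q.1 * X ω' p.2 q.2 ∂P)
              - Matrix.of fun (p q : Fin d × Fin d) =>
                  (∫ ω', X ω' p.1 q.1 ∂P) * ∫ ω', X ω' p.2 q.2 ∂P) := by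
  set C : Matrix (Fin d × Fin d) (Fin d × Fin d) ℂ :=
    (Matrix.of fun (p q : Fin d × Fin d) => ∫ ω', X ω' p.1 q.1 * X ω' p.2 q.2 ∂P)
      - Matrix.of fun (p q : Fin d × Fin d) => (∫ ω', X ω' p.1 q.1 ∂P) * ∫ ω', X ω' p.2 q.2 ∂P
  have hconj : ∀ i j ω, X ω j i = starRingEnd ℂ (X ω i j) := fun i j ω => by
    simpa using (congr_fun₂ (hherm ω).eq j i).symm
  calc (∫ ω, (opNorm (X ω - Matrix.of fun i j => ∫ ω', X ω' i j ∂P)) ^ 2 ∂P)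
      ≤ ∑ i, ∑ j, ∫ ω, ‖X ω i j - ∫ ω', X ω' i j ∂P‖ ^ 2 ∂P :=
        integral_opNorm_sq_le_sum_integral_norm_sq _ fun i j =>
          integrable_norm_sub_sq (hint i j) (hint2 i j j i) (hconj i j) _
    _ = ∑ i, ∑ j, RCLike.re (C (i, j) (j, i)) := by
        simp_rw [integral_norm_sub_integral_sq (hint _ _) (hint2 _ _ _ _) (hconj _ _)]
        rfl
    _ ≤ ∑ _i : Fin d, ∑ _j : Fin d, opNorm C := by
        gcongr with i _ j _
        exact (RCLike.re_le_norm _).trans (norm_apply_le_opNorm C _ _)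
    _ = (d : ℝ) ^ 2 * opNorm C := by
        simp only [Finset.sum_const, Finset.card_univ, Fintype.card_fin, nsmul_eq_mul]
        ring

/-- Second-moment bound behind the operator Chebyshev inequality:
`𝔼[‖X − μ‖∞²] ≤ d² ‖𝔼[X ⊗ X] − μ ⊗ μ‖∞`. -/
theorem operator_second_moment_bound
    {Ω : Type*} [MeasurableSpace Ω] (P : Measure Ω) [IsProbabilityMeasure P]
    (d : ℕ) (hd : 1 ≤ d)
    (X : Ω → Matrix (Fin d) (Fin d) ℂ)
    (hherm : ∀ ω, (X ω).IsHermitian)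
    (hmeas : ∀ i j, Measurable fun ω => X ω i j)
    (hint : ∀ i j, Integrable (fun ω => X ω i j) P)
    (hint2 : ∀ i j k l, Integrable (fun ω => X ω i j * X ω k l) P) :
    (∫ ω, (opNorm (X ω - Matrix.of fun i j => ∫ ω', X ω' i j ∂P)) ^ 2 ∂P)
      ≤ (d : ℝ) ^ 2 *
          opNorm
            ((Matrix.of fun (p q : Fin d × Fin d) => ∫ ω', X ω' p.1 q.1 * X ω' p.2 q.2 ∂P)
              - Matrix.of fun (p q : Fin d × Fin d) =>
                  (∫ ω', X ω' p.1 q.1 ∂P) * ∫ ω', X ω' p.2 q.2 ∂P) :=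
  operator_second_moment_bound_general P d X hherm hint hint2
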